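/- arXiv:0907.4496 — 3 statements merged into one kernel-verified Lean document; each statement's English description precedes it below -/
import Mathlib

section
/- Let G ≠ {1} be a finite group, H ≤ G a subgroup containing no nontrivial normal subgroup of G (i.e., ⋂_{g∈G} gHg⁻¹ = {1}), let H₁, …, H_r be subgroups of H, and let 0 → M → ⊕_{i=1}^r ℤ[G/H_i] → ω(G/H) → 0 be an exact sequence of ℤ[G]-modules, where M is a G-lattice. Then the G-action on M fails to be faithful if and only if r = 1 and H₁ = H. -/
/-!
Taking traces along the exact sequence gives a character identity: for every `g`,
`tr ρ(g) + |Fix(g, G/H)| - 1 = ∑ᵢ |Fix(g, G/Hᵢ)|`, because a permutation lattice `ℤ[X]` has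
trace the number of fixed points and `ω(G/H)` is `ℤ[G/H]` minus a trivial summand.

If `g ≠ 1` acts trivially on `M`, comparing the identity at `g` and at `1` shows that `g` moves
as many points of `⊔ᵢ G/Hᵢ` as of `G/H`; the latter number is positive since `H` has trivial
normal core. Every non-fixed point of `G/H` has `[H : Hᵢ]` preimages in `G/Hᵢ`, all non-fixed,
so `∑ᵢ [H : Hᵢ] ≤ 1`, forcing `r = 1` and `H₁ = H`. Conversely, if `r = 1` and `H₁ = H` the
identity reads `tr ρ(g) = 1`, so `M` has rank one and every `ρ(g)` is the identity.
-/

open LinearMap Module MulAction Function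

theorem Function.ncard_fixedPoints_sigma_map {ι : Type*} [Fintype ι] {X : ι → Type*}
    [∀ i, Finite (X i)] (σ : ∀ i, X i → X i) :
    (fixedPoints (Sigma.map id σ)).ncard = ∑ i, (fixedPoints (σ i)).ncard := by
  simp_rw [← Nat.card_coe_set_eq]
  rw [← Nat.card_sigma]
  exact Nat.card_congr
    { toFun p := ⟨p.1.1, p.1.2, eq_of_heq (Sigma.mk.inj_iff.mp p.2).2⟩
      invFun q := ⟨⟨q.1, q.2.1⟩, congrArg (Sigma.mk q.1) q.2.2⟩ }

namespace LinearMap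

variable {R : Type*} [CommRing R]

theorem trace_eq_add_of_exact {A B C : Type*} [AddCommGroup A] [Module R A] [AddCommGroup B]
    [Module R B] [AddCommGroup C] [Module R C] [Module.Free R A] [Module.Finite R A]
    [Module.Free R C] [Module.Finite R C]
    {f : A →ₗ[R] B} {p : B →ₗ[R] C} (hf : Injective f) (hp : Surjective p)
    (hfp : Exact f p) {φA : A →ₗ[R] A} {φB : B →ₗ[R] B} {φC : C →ₗ[R] C}
    (hA : φB ∘ₗ f = f ∘ₗ φA) (hC : p ∘ₗ φB = φC ∘ₗ p) :
    trace R B φB = trace R A φA + trace R C φC := by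
  -- A section of `p` splits `B ≃ A × C`; there `φB` is block triangular with diagonal `φA, φC`.
  obtain ⟨l, hl⟩ := Module.projective_lifting_property p LinearMap.id hp
  obtain ⟨e, rfl, rfl⟩ := hfp.splitSurjectiveEquiv hf ⟨l, hl⟩
  have : Module.Free R B := .of_equiv e.symm
  have : Module.Finite R B := .equiv e.symm
  have hsplit : e.conj φB = e.conj φB ∘ₗ inl R A C ∘ₗ fst R A C
      + e.conj φB ∘ₗ inr R A C ∘ₗ snd R A C := by
    rw [← comp_add, ← comp_id (e.conj φB)]
    congr 1
    ext <;> simp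
  have hA' : fst R A C ∘ₗ e.conj φB ∘ₗ inl R A C = φA := by
    ext x
    simpa using congr((e ($hA x)).1)
  have hC' : snd R A C ∘ₗ e.conj φB ∘ₗ inr R A C = φC := by
    ext x
    simpa using congr($hC (e.symm (0, x)))
  rw [← trace_conj' φB e, hsplit, map_add, ← comp_assoc, ← comp_assoc,
    trace_comp_comm' (fst R A C), trace_comp_comm' (snd R A C), hA', hC']

theorem trace_eq_ncard_fixedPoints {M ι : Type*} [AddCommGroup M] [Module R M] [Fintype ι]
    (b : Basis ι R M) {σ : ι → ι} {φ : M →ₗ[R] M} (h : ∀ j, φ (b j) = b (σ j)) :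
    trace R M φ = (fixedPoints σ).ncard := by
  classical
  rw [trace_eq_matrix_trace R b, Matrix.trace]
  simp_rw [Matrix.diag, toMatrix_apply, h, Basis.repr_self, Finsupp.single_apply,
    Finset.sum_boole, ← Nat.card_coe_set_eq, Nat.card_eq_fintype_card, Fintype.card_ofFinset]
  rfl

theorem trace_lmapDomain {X : Type*} [Finite X] (σ : X → X) :
    trace R (X →₀ R) (Finsupp.lmapDomain R R σ) = (fixedPoints σ).ncard := by
  have := Fintype.ofFinite X
  exact trace_eq_ncard_fixedPoints Finsupp.basisSingleOne fun x => by simp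

theorem trace_pi_lmapDomain {ι : Type*} [Fintype ι] {X : ι → Type*} [∀ i, Finite (X i)]
    (σ : ∀ i, X i → X i) :
    trace R (∀ i, X i →₀ R) (LinearMap.pi fun i => Finsupp.lmapDomain R R (σ i) ∘ₗ proj i)
      = ∑ i, ((fixedPoints (σ i)).ncard : R) := by
  classical
  have := fun i => Fintype.ofFinite (X i)
  rw [trace_eq_ncard_fixedPoints (Pi.basis fun i => Finsupp.basisSingleOne)
    (σ := Sigma.map _root_.id σ), ncard_fixedPoints_sigma_map, Nat.cast_sum]
  rintro ⟨i, x⟩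
  ext j : 1
  by_cases hj : j = i
  · subst hj; simp [Sigma.map]
  · simp [Sigma.map, Pi.single_eq_of_ne hj]

theorem trace_restrict_lmapDomain_ker_linearCombination_one {X : Type*} [Finite X] [Nonempty X]
    (σ : X → X) (hσ : ∀ v ∈ ker (Finsupp.linearCombination ℤ fun _ : X => (1 : ℤ)),
      Finsupp.lmapDomain ℤ ℤ σ v ∈ ker (Finsupp.linearCombination ℤ fun _ : X => (1 : ℤ))) :
    trace ℤ _ ((Finsupp.lmapDomain ℤ ℤ σ).restrict hσ) = (fixedPoints σ).ncard - 1 := by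
  have haug : Surjective (Finsupp.linearCombination ℤ fun _ : X => (1 : ℤ)) := fun c =>
    ⟨Finsupp.single (Classical.arbitrary X) c, by simp⟩
  have key := trace_eq_add_of_exact (Submodule.injective_subtype _) haug
    (exact_subtype_ker_map _) (φA := (Finsupp.lmapDomain ℤ ℤ σ).restrict hσ) (φC := id)
    (subtype_comp_restrict hσ).symm (by rw [Finsupp.linearCombination_comp_lmapDomain]; rfl)
  rw [trace_lmapDomain, trace_id, finrank_self, Nat.cast_one] at key
  exact eq_sub_of_add_eq key.symm

theorem eq_id_of_finrank_eq_one_of_trace_eq_one [StrongRankCondition R] {M : Type*}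
    [AddCommGroup M] [Module R M] [Module.Free R M] (d1 : finrank R M = 1) {u : M →ₗ[R] M}
    (hu : trace R M u = 1) : u = LinearMap.id := by
  have : Module.Finite R M := Module.finite_of_finrank_eq_succ d1
  obtain ⟨c, rfl, -⟩ := u.existsUnique_eq_smul_id_of_finrank_eq_one d1
  rw [map_smul, trace_id, d1, Nat.cast_one, smul_eq_mul, mul_one] at hu
  rw [hu, one_smul]

end LinearMap

section FixedPointCounts

variable {G : Type*} [Group G] {ι : Type*} [Fintype ι] {X : ι → Type*} [∀ i, MulAction G (X i)]
  [∀ i, Finite (X i)] {Y : Type*} [MulAction G Y] [Finite Y]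

theorem trace_add_ncard_fixedBy_eq_sum [Nonempty Y] {M : Type*} [AddCommGroup M] [Module ℤ M]
    [Module.Free ℤ M] [Module.Finite ℤ M] (ρ : Representation ℤ G M)
    (f : M →ₗ[ℤ] ∀ i, X i →₀ ℤ) (π : (∀ i, X i →₀ ℤ) →ₗ[ℤ] Y →₀ ℤ) (hf : Injective f)
    (hexact : range f = ker π)
    (hπ : range π = ker (Finsupp.linearCombination ℤ fun _ : Y => (1 : ℤ)))
    (hfequiv : ∀ (g : G) (m : M), f (ρ g m) = fun i => Finsupp.mapDomain (g • ·) (f m i))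
    (hπequiv : ∀ (g : G) (v : ∀ i, X i →₀ ℤ),
      π (fun i => Finsupp.mapDomain (g • ·) (v i)) = Finsupp.mapDomain (g • ·) (π v))
    (g : G) :
    trace ℤ M (ρ g) + (fixedBy Y g).ncard - 1 = ∑ i, ((fixedBy (X i) g).ncard : ℤ) := by
  let ω := ker (Finsupp.linearCombination ℤ fun _ : Y => (1 : ℤ))
  have hω : ∀ v ∈ ω, Finsupp.lmapDomain ℤ ℤ (g • ·) v ∈ ω := fun v hv => by
    rwa [mem_ker, Finsupp.lmapDomain_apply, Finsupp.linearCombination_mapDomain]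
  let p : (∀ i, X i →₀ ℤ) →ₗ[ℤ] ω := π.codRestrict ω fun v => hπ.le (mem_range_self π v)
  have hp : Surjective p := fun w => by
    obtain ⟨v, hv⟩ : (w : Y →₀ ℤ) ∈ range π := hπ ▸ w.2
    exact ⟨v, Subtype.ext hv⟩
  have hfp : Exact f p := exact_iff.mpr (by rw [ker_codRestrict, hexact])
  have key := trace_eq_add_of_exact hf hp hfp (φA := ρ g)
    (φB := LinearMap.pi fun i => Finsupp.lmapDomain ℤ ℤ (g • ·) ∘ₗ proj i)
    (φC := (Finsupp.lmapDomain ℤ ℤ (g • ·)).restrict hω)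
    (LinearMap.ext fun m => (hfequiv g m).symm) (LinearMap.ext fun v => Subtype.ext (hπequiv g v))
  rw [trace_pi_lmapDomain, trace_restrict_lmapDomain_ker_linearCombination_one] at key
  change trace ℤ M (ρ g) + (fixedPoints (g • · : Y → Y)).ncard - 1
    = ∑ i, ((fixedPoints (g • · : X i → X i)).ncard : ℤ)
  rw [key]
  ring

theorem sum_ncard_compl_fixedBy_eq {χ : G → ℤ}
    (hχ : ∀ g, χ g + (fixedBy Y g).ncard - 1 = ∑ i, ((fixedBy (X i) g).ncard : ℤ))
    {g : G} (hg : χ g = χ 1) :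
    ∑ i, (fixedBy (X i) g)ᶜ.ncard = (fixedBy Y g)ᶜ.ncard := by
  have hX : ∀ i, Nat.card (X i) = (fixedBy (X i) g).ncard + (fixedBy (X i) g)ᶜ.ncard :=
    fun i => (Set.ncard_add_ncard_compl _).symm
  have hY : Nat.card Y = (fixedBy Y g).ncard + (fixedBy Y g)ᶜ.ncard :=
    (Set.ncard_add_ncard_compl _).symm
  have h1 := hχ 1
  simp_rw [fixedBy_one_eq_univ, Set.ncard_univ, hX, hY, Nat.cast_add, Finset.sum_add_distrib,
    ← hg] at h1
  zify
  linarith [hχ g]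

end FixedPointCounts

namespace Subgroup

variable {G : Type*} [Group G]

theorem quotientMapOfLE_smul {K H : Subgroup G} (hKH : K ≤ H) (g : G) (x : G ⧸ K) :
    quotientMapOfLE hKH (g • x) = g • quotientMapOfLE hKH x :=
  QuotientGroup.induction_on x fun _ => rfl

theorem relIndex_mul_ncard_compl_fixedBy_le {K H : Subgroup G} (hKH : K ≤ H) [Finite (G ⧸ K)]
    (g : G) : K.relIndex H * (fixedBy (G ⧸ H) g)ᶜ.ncard ≤ (fixedBy (G ⧸ K) g)ᶜ.ncard := by
  let e := quotientEquivProdOfLE hKH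
  have he : ∀ x, (e x).1 = quotientMapOfLE hKH x :=
    fun x => QuotientGroup.induction_on x fun _ => rfl
  calc K.relIndex H * (fixedBy (G ⧸ H) g)ᶜ.ncard
      = ((fixedBy (G ⧸ H) g)ᶜ ×ˢ (Set.univ : Set (H ⧸ K.subgroupOf H))).ncard := by
        rw [Set.ncard_prod, Set.ncard_univ, mul_comm]; rfl
    _ = (e ⁻¹' ((fixedBy (G ⧸ H) g)ᶜ ×ˢ Set.univ)).ncard :=
        (Set.ncard_preimage_of_injective_subset_range e.injective (by simp)).symm
    _ ≤ (fixedBy (G ⧸ K) g)ᶜ.ncard := by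
        refine Set.ncard_le_ncard (fun x hx hfix => ?_) (Set.toFinite _)
        simp only [Set.mem_preimage, Set.mem_prod, Set.mem_compl_iff, he] at hx
        exact hx.1 (by rw [mem_fixedBy, ← quotientMapOfLE_smul, hfix])

theorem exists_smul_ne_of_normalCore_eq_bot {H : Subgroup G} (hH : H.normalCore = ⊥) {g : G}
    (hg : g ≠ 1) : ∃ x : G ⧸ H, g • x ≠ x := by
  by_contra! hfix
  refine hg (mem_bot.mp ?_)
  rw [← hH, normalCore_eq_ker, MonoidHom.mem_ker]
  exact Equiv.ext hfix

theorem eq_one_and_forall_eq_of_sum_ncard_compl_fixedBy_eq [Finite G] {H : Subgroup G} {r : ℕ}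
    {Hs : Fin r → Subgroup G} (hHs : ∀ i, Hs i ≤ H) {g : G} (hg : ∃ x : G ⧸ H, g • x ≠ x)
    (hsum : ∑ i, (fixedBy (G ⧸ Hs i) g)ᶜ.ncard = (fixedBy (G ⧸ H) g)ᶜ.ncard) :
    r = 1 ∧ ∀ i, Hs i = H := by
  set N := (fixedBy (G ⧸ H) g)ᶜ.ncard
  have hN : 0 < N := (Set.ncard_pos (Set.toFinite _)).mpr hg
  have hle : (∑ i, (Hs i).relIndex H) * N ≤ 1 * N :=
    calc (∑ i, (Hs i).relIndex H) * N = ∑ i, (Hs i).relIndex H * N := Finset.sum_mul _ _ _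
      _ ≤ ∑ i, (fixedBy (G ⧸ Hs i) g)ᶜ.ncard :=
        Finset.sum_le_sum fun i _ => relIndex_mul_ncard_compl_fixedBy_le (hHs i) g
      _ = 1 * N := by rw [hsum, one_mul]
  have hsum_le : ∑ i, (Hs i).relIndex H ≤ 1 := Nat.le_of_mul_le_mul_right hle hN
  have hpos : ∀ i, 1 ≤ (Hs i).relIndex H :=
    fun i => Nat.one_le_iff_ne_zero.mpr index_ne_zero_of_finite
  obtain rfl : r = 1 := by
    refine le_antisymm ?_ (Nat.one_le_iff_ne_zero.mpr ?_)
    · simpa using (Finset.card_nsmul_le_sum _ _ 1 fun i _ => hpos i).trans hsum_le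
    · rintro rfl
      simp only [Finset.univ_eq_empty, Finset.sum_empty] at hsum
      omega
  refine ⟨rfl, fun i => le_antisymm (hHs i) (relIndex_eq_one.mp ?_)⟩
  rw [Fin.sum_univ_one] at hsum_le
  exact le_antisymm (Subsingleton.elim i 0 ▸ hsum_le) (hpos i)

end Subgroup

/-- Let `G ≠ {1}` be a finite group, `H ≤ G` a subgroup containing no
nontrivial normal subgroup of `G` (i.e. `⋂_{g∈G} gHg⁻¹ = {1}`, expressed via the normal
core), let `H₁, …, H_r` be subgroups of `H`, and let
`0 → M → ⊕_{i=1}^r ℤ[G/H_i] → ω(G/H) → 0` be an exact sequence of `ℤ[G]`-modules, where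
`M` is a `G`-lattice (a `ℤ[G]`-module which is finite free over `ℤ`).  Here `ℤ[G/K]` is
modelled as `(G ⧸ K) →₀ ℤ` with `G` acting by left translation, the direct sum is the
(finite) product, `ω(G/H)` is the kernel of the augmentation map `ℤ[G/H] → ℤ`, and the
maps `f, π` are `G`-equivariant `ℤ`-linear maps with `f` injective, `ker π = range f` and
`range π = ω(G/H)`.  Then the `G`-action on `M` fails to be faithful if and only if
`r = 1` and `H₁ = H`. -/
theorem lattice_not_faithful_iff {G : Type*} [Group G] [Finite G] [Nontrivial G]
    (H : Subgroup G) (hH : H.normalCore = ⊥)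
    (r : ℕ) (Hs : Fin r → Subgroup G) (hHs : ∀ i, Hs i ≤ H)
    (M : Type*) [AddCommGroup M] [Module ℤ M] [Module.Free ℤ M] [Module.Finite ℤ M]
    (ρ : Representation ℤ G M)
    (f : M →ₗ[ℤ] ((i : Fin r) → ((G ⧸ Hs i) →₀ ℤ)))
    (π : ((i : Fin r) → ((G ⧸ Hs i) →₀ ℤ)) →ₗ[ℤ] ((G ⧸ H) →₀ ℤ))
    (hf : Function.Injective f)
    (hexact : LinearMap.range f = LinearMap.ker π)
    (hπ : LinearMap.range π
      = LinearMap.ker (Finsupp.linearCombination ℤ (fun _ : G ⧸ H => (1 : ℤ))))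
    (hfequiv : ∀ (x : G) (m : M),
      f (ρ x m) = fun i => (Representation.ofMulAction ℤ G (G ⧸ Hs i) x (MonoidAlgebra.ofCoeff (f m i))).coeff)
    (hπequiv : ∀ (x : G) (v : (i : Fin r) → ((G ⧸ Hs i) →₀ ℤ)),
      π (fun i => (Representation.ofMulAction ℤ G (G ⧸ Hs i) x (MonoidAlgebra.ofCoeff (v i))).coeff)
        = (Representation.ofMulAction ℤ G (G ⧸ H) x (MonoidAlgebra.ofCoeff (π v))).coeff) :
    ¬ Function.Injective ⇑ρ ↔ (r = 1 ∧ ∀ i, Hs i = H) := by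
  -- `ofMulAction` acts on `ofCoeff v` as `Finsupp.mapDomain (g • ·) v` by definition.
  have hchar := trace_add_ncard_fixedBy_eq_sum ρ f π hf hexact hπ hfequiv hπequiv
  constructor
  · intro hρ
    obtain ⟨g, hρg, hg⟩ : ∃ g, ρ g = 1 ∧ g ≠ 1 := by
      simpa [injective_iff_map_eq_one] using hρ
    exact Subgroup.eq_one_and_forall_eq_of_sum_ncard_compl_fixedBy_eq hHs
      (Subgroup.exists_smul_ne_of_normalCore_eq_bot hH hg)
      (sum_ncard_compl_fixedBy_eq hchar (by rw [hρg, ρ.map_one]))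
  · rintro ⟨rfl, hHsH⟩
    obtain rfl := hHsH 0
    have htrace : ∀ g, trace ℤ M (ρ g) = 1 := fun g => by
      have := hchar g
      rw [Fin.sum_univ_one] at this
      linarith
    have hrank : finrank ℤ M = 1 := by
      simpa [trace_one] using htrace 1
    have hρ : ∀ g, ρ g = 1 := fun g => eq_id_of_finrank_eq_one_of_trace_eq_one hrank (htrace g)
    obtain ⟨g, hg⟩ := exists_ne (1 : G)
    exact fun hinj => hg (hinj (by rw [hρ g, hρ 1]))
end

section
/- Let G be a finite group, H ≤ G a subgroup containing no nontrivial normal subgroup of G (i.e., ⋂_{g∈G} gHg⁻¹ = {1}), let H₁ be a proper subgroup of H, and let 0 → M → ℤ[G/H₁] → ω(G/H) → 0 be an exact sequence of ℤ[G]-modules, where M is a G-lattice. Then the G-action on M is faithful. -/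
/-!
Let `K` be the kernel of `ρ`. Since `K` acts trivially on `M`, the image `f(M) = ker π`
consists of `K`-invariants of `ℤ[G/H₁]`. The rank of the `K`-invariants of a permutation
module is the number of `K`-orbits, and averaging over `K` lifts a multiple of every invariant
of `ω(G/H)` to an invariant of `ℤ[G/H₁]`. This gives `n·m − (n − 1) + (t − 1) ≤ t₁ ≤ t·m`,
where `n = [G : H]`, `m = [H : H₁] ≥ 2` and `t₁, t` are the numbers of `K`-orbits on `G/H₁`
and `G/H`. Hence `t = n`: `K` fixes every coset of `H`, so `K` lies in the normal core of `H`,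
which is trivial.
-/

open Module MulAction LinearMap Subgroup

section RankNullity

variable {R V W : Type*} [CommRing R] [IsDomain R]
  [AddCommGroup V] [Module R V] [Module.Finite R V] [AddCommGroup W] [Module R W]

lemma LinearMap.finrank_ker_add_finrank_range (φ : V →ₗ[R] W) :
    finrank R (ker φ) + finrank R (range φ) = finrank R V := by
  rw [← φ.quotKerEquivRange.finrank_eq, add_comm, Submodule.finrank_quotient_add_finrank]

lemma LinearMap.finrank_ker_add_finrank_map_of_ker_le [IsNoetherianRing R] (φ : V →ₗ[R] W)
    {p : Submodule R V} (hp : ker φ ≤ p) :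
    finrank R (ker φ) + finrank R (p.map φ) = finrank R p := by
  rw [← (φ.domRestrict p).finrank_ker_add_finrank_range, range_domRestrict, ker_domRestrict,
    (Submodule.comapSubtypeEquivOfLe hp).finrank_eq]

lemma finrank_le_finrank_inf_ker_add_one [IsNoetherianRing R] (φ : V →ₗ[R] R)
    (p : Submodule R V) :
    finrank R p ≤ finrank R ↥(p ⊓ ker φ) + 1 := by
  have hrange : finrank R (range (φ.domRestrict p)) ≤ 1 :=
    (Submodule.finrank_le _).trans (finrank_self R).le
  rw [← (φ.domRestrict p).finrank_ker_add_finrank_range, ker_domRestrict,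
    (Submodule.equivMapOfInjective _ p.injective_subtype _).finrank_eq,
    Submodule.map_comap_subtype]
  omega

end RankNullity

lemma finrank_ker_linearCombination_one_add_one {R α : Type*} [CommRing R] [IsDomain R]
    [Finite α] [Nonempty α] :
    finrank R (ker (Finsupp.linearCombination R fun _ : α => (1 : R))) + 1 = Nat.card α := by
  classical
  have := Fintype.ofFinite α
  have hsurj : range (Finsupp.linearCombination R fun _ : α => (1 : R)) = ⊤ := by
    refine range_eq_top.mpr fun r => ⟨Finsupp.single (Classical.arbitrary α) r, ?_⟩
    simp
  rw [← finrank_self R, ← finrank_top R R, ← hsurj, LinearMap.finrank_ker_add_finrank_range,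
    finrank_finsupp_self, Nat.card_eq_fintype_card]

noncomputable def permRep (k K α : Type*) [CommSemiring k] [Monoid K] [MulAction K α] :
    Representation k K (α →₀ k) where
  toFun g := Finsupp.lmapDomain k k (g • ·)
  map_one' := by ext; simp
  map_mul' g h := by ext; simp [mul_smul]

section PermRep

variable {k K α : Type*} [CommRing k] [Group K] [MulAction K α]

@[simp]
lemma permRep_apply_smul (g : K) (v : α →₀ k) (a : α) : permRep k K α g v (g • a) = v a :=
  Finsupp.mapDomain_apply (MulAction.injective g) v a

lemma mem_invariants_permRep_iff {v : α →₀ k} :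
    v ∈ (permRep k K α).invariants ↔ ∀ (g : K) (a : α), v (g • a) = v a := by
  refine ⟨fun hv g a => ?_, fun hv g => Finsupp.ext fun a => ?_⟩
  · rw [← permRep_apply_smul g v a, hv g]
  · obtain ⟨b, rfl⟩ : ∃ b, a = g • b := ⟨g⁻¹ • a, (smul_inv_smul g a).symm⟩
    rw [permRep_apply_smul, hv]

noncomputable def orbitPullback [Finite α] :
    (orbitRel.Quotient K α →₀ k) →ₗ[k] (α →₀ k) :=
  (Finsupp.linearEquivFunOnFinite k k α).symm.toLinearMap ∘ₗ
    LinearMap.funLeft k k (Quotient.mk (orbitRel K α)) ∘ₗ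
    (Finsupp.linearEquivFunOnFinite k k _).toLinearMap

lemma orbitPullback_apply [Finite α] (w : orbitRel.Quotient K α →₀ k) (a : α) :
    orbitPullback w a = w (Quotient.mk _ a) := rfl

lemma orbitPullback_injective [Finite α] :
    Function.Injective (orbitPullback (k := k) (K := K) (α := α)) := by
  intro w₁ w₂ h
  ext c
  induction c using Quotient.inductionOn with
  | h a => rw [← orbitPullback_apply, h, orbitPullback_apply]

lemma range_orbitPullback [Finite α] :
    LinearMap.range (orbitPullback (k := k) (K := K) (α := α)) = (permRep k K α).invariants := by
  ext v
  simp only [LinearMap.mem_range, mem_invariants_permRep_iff]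
  constructor
  · rintro ⟨w, rfl⟩ g a
    rw [orbitPullback_apply, orbitPullback_apply]
    exact congrArg w (Quotient.sound ⟨g, rfl⟩)
  · intro hv
    refine ⟨Finsupp.equivFunOnFinite.symm fun c => v c.out, Finsupp.ext fun a => ?_⟩
    obtain ⟨g, hg⟩ : (Quotient.mk (orbitRel K α) a).out ∈ orbit K a :=
      Quotient.mk_out (s := orbitRel K α) a
    rw [orbitPullback_apply, Finsupp.coe_equivFunOnFinite_symm, ← hg, hv]

lemma finrank_invariants_permRep [StrongRankCondition k] [Finite α] :
    finrank k (permRep k K α).invariants = Nat.card (orbitRel.Quotient K α) := by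
  classical
  have := Fintype.ofFinite (orbitRel.Quotient K α)
  rw [← range_orbitPullback, LinearMap.finrank_range_of_inj orbitPullback_injective,
    finrank_finsupp_self, Nat.card_eq_fintype_card]

end PermRep

section Averaging

variable {k G V W : Type*} [CommRing k] [Group G] [Fintype G] [AddCommGroup V] [Module k V]
  [AddCommGroup W] [Module k W] {ρV : Representation k G V} {ρW : Representation k G W}
  {π : V →ₗ[k] W}

lemma card_smul_mem_map_invariants (hπ : ∀ g v, π (ρV g v) = ρW g (π v)) {w : W}
    (hw : w ∈ ρW.invariants) (hw' : w ∈ LinearMap.range π) :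
    Fintype.card G • w ∈ ρV.invariants.map π := by
  obtain ⟨v, rfl⟩ := hw'
  refine ⟨∑ g, ρV g v, fun h => ?_, ?_⟩
  · simp only [map_sum, ← Module.End.mul_apply, ← map_mul]
    exact Fintype.sum_equiv (Equiv.mulLeft h) _ _ fun _ => rfl
  · simp only [map_sum, hπ, hw _, Finset.sum_const, Finset.card_univ]

lemma finrank_invariants_inf_range_le [IsDomain k] [CharZero k] [IsNoetherianRing k]
    [Module.Finite k W] [IsTorsionFree k W] (hπ : ∀ g v, π (ρV g v) = ρW g (π v)) :
    finrank k ↥(ρW.invariants ⊓ LinearMap.range π) ≤ finrank k ↥(ρV.invariants.map π) := by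
  let μ : ↥(ρW.invariants ⊓ LinearMap.range π) →ₗ[k] ↥(ρV.invariants.map π) :=
    ((Fintype.card G : k) • (ρW.invariants ⊓ LinearMap.range π).subtype).codRestrict _
      fun w => by
        simpa [Nat.cast_smul_eq_nsmul] using card_smul_mem_map_invariants hπ w.2.1 w.2.2
  refine LinearMap.finrank_le_finrank_of_injective (f := μ) fun x y hxy => Subtype.ext ?_
  have hcard : (Fintype.card G : k) ≠ 0 := Nat.cast_ne_zero.mpr Fintype.card_ne_zero
  exact smul_right_injective W hcard (congrArg Subtype.val hxy)

end Averaging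

section Orbits

variable {K α β F : Type*} [Group K] [MulAction K α] [MulAction K β]

lemma card_orbitRel_quotient_le_mul [Finite β] [Finite F] {p : α → β}
    (hp : ∀ (g : K) (a : α), p (g • a) = g • p a) {e : α → F}
    (hpe : Function.Injective fun a => (p a, e a)) :
    Nat.card (orbitRel.Quotient K α) ≤ Nat.card (orbitRel.Quotient K β) * Nat.card F := by
  let pbar : orbitRel.Quotient K α → orbitRel.Quotient K β :=
    Quotient.map p fun a b ⟨g, hg⟩ => ⟨g, by rw [← hg, hp]⟩
  -- every orbit in `α` meets the fibre of `p` over the chosen representative of its image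
  have hrep : ∀ c, ∃ a : α, Quotient.mk _ a = c ∧ p a = (pbar c).out := by
    refine fun c => Quotient.inductionOn c fun a => ?_
    obtain ⟨g, hg⟩ : (pbar (Quotient.mk _ a)).out ∈ orbit K (p a) :=
      Quotient.mk_out (s := orbitRel K β) (p a)
    exact ⟨g • a, Quotient.sound ⟨g, rfl⟩, by rw [hp]; exact hg⟩
  choose rep hrep_mk hrep_p using hrep
  rw [← Nat.card_prod]
  refine Nat.card_le_card_of_injective (fun c => (pbar c, e (rep c))) fun c₁ c₂ h => ?_
  obtain ⟨hpbar, he⟩ := Prod.mk.inj h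
  rw [← hrep_mk c₁, ← hrep_mk c₂, hpe (Prod.ext (by simp only [hrep_p, hpbar]) he)]

lemma smul_eq_self_of_card_le_card_orbitRel_quotient [Finite α]
    (h : Nat.card α ≤ Nat.card (orbitRel.Quotient K α)) (g : K) (a : α) : g • a = a :=
  ((Quotient.mk_surjective (s := orbitRel K α)).bijective_of_nat_card_le h).1
    (Quotient.sound ⟨g, rfl⟩)

end Orbits

section CosetModules

variable {G : Type*} [Group G] {H H₁ : Subgroup G}

lemma card_orbitRel_quotient_le_mul_relIndex [Finite G] (hle : H₁ ≤ H) (K : Subgroup G) :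
    Nat.card (orbitRel.Quotient K (G ⧸ H₁))
      ≤ Nat.card (orbitRel.Quotient K (G ⧸ H)) * H₁.relIndex H := by
  let e := quotientEquivProdOfLE hle
  have hp : ∀ (g : K) (x : G ⧸ H₁), (e (g • x)).1 = g • (e x).1 := fun g x =>
    QuotientGroup.induction_on x fun _ => rfl
  exact card_orbitRel_quotient_le_mul hp (e := fun x => (e x).2) e.injective

theorem le_normalCore_of_ker_le_invariants [Finite G] (hH₁ : H₁ < H) (K : Subgroup G)
    (π : ((G ⧸ H₁) →₀ ℤ) →ₗ[ℤ] ((G ⧸ H) →₀ ℤ))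
    (hπ : range π = ker (Finsupp.linearCombination ℤ fun _ : G ⧸ H => (1 : ℤ)))
    (hπequiv : ∀ (g : K) v, π (permRep ℤ K (G ⧸ H₁) g v) = permRep ℤ K (G ⧸ H) g (π v))
    (hker : ker π ≤ (permRep ℤ K (G ⧸ H₁)).invariants) :
    K ≤ H.normalCore := by
  classical
  have := Fintype.ofFinite K
  have := Fintype.ofFinite (G ⧸ H₁)
  have hcard : Nat.card (G ⧸ H₁) = H₁.relIndex H * Nat.card (G ⧸ H) :=
    (relIndex_mul_index hH₁.le).symm
  have hω := finrank_ker_linearCombination_one_add_one (R := ℤ) (α := G ⧸ H)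
  have hrank := π.finrank_ker_add_finrank_range
  rw [hπ, finrank_finsupp_self, ← Nat.card_eq_fintype_card, hcard] at hrank
  have hinv := π.finrank_ker_add_finrank_map_of_ker_le hker
  have havg := finrank_invariants_inf_range_le hπequiv
  have haug := finrank_le_finrank_inf_ker_add_one
    (Finsupp.linearCombination ℤ fun _ : G ⧸ H => (1 : ℤ)) (permRep ℤ K (G ⧸ H)).invariants
  rw [finrank_invariants_permRep] at hinv haug
  rw [← hπ] at haug
  have horbits := card_orbitRel_quotient_le_mul_relIndex hH₁.le K
  have hm : 2 ≤ H₁.relIndex H := by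
    have hpos : 0 < Nat.card (G ⧸ H₁) := Nat.card_pos
    rw [hcard] at hpos
    have hne : H₁.relIndex H ≠ 1 := fun h => hH₁.not_ge (relIndex_eq_one.mp h)
    have := pos_of_mul_pos_left hpos (Nat.zero_le _)
    omega
  have hle : Nat.card (G ⧸ H) ≤ Nat.card (orbitRel.Quotient K (G ⧸ H)) := by
    nlinarith
  intro g hg
  rw [normalCore_eq_ker, MonoidHom.mem_ker]
  exact Equiv.ext fun x => smul_eq_self_of_card_le_card_orbitRel_quotient hle ⟨g, hg⟩ x

end CosetModules

theorem lattice_faithful_of_proper_general {G : Type*} [Group G] [Finite G]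
    (H : Subgroup G) (hH : H.normalCore = ⊥)
    (H₁ : Subgroup G) (hH₁ : H₁ < H)
    (M : Type*) [AddCommGroup M] [Module ℤ M]
    (ρ : Representation ℤ G M)
    (f : M →ₗ[ℤ] ((G ⧸ H₁) →₀ ℤ))
    (π : ((G ⧸ H₁) →₀ ℤ) →ₗ[ℤ] ((G ⧸ H) →₀ ℤ))
    (hexact : LinearMap.range f = LinearMap.ker π)
    (hπ : LinearMap.range π
      = LinearMap.ker (Finsupp.linearCombination ℤ (fun _ : G ⧸ H => (1 : ℤ))))
    (hfequiv : ∀ (x : G) (m : M),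
      f (ρ x m) = Finsupp.lmapDomain ℤ ℤ (fun q : G ⧸ H₁ => x • q) (f m))
    (hπequiv : ∀ (x : G) (v : (G ⧸ H₁) →₀ ℤ),
      π (Finsupp.lmapDomain ℤ ℤ (fun q : G ⧸ H₁ => x • q) v)
        = Finsupp.lmapDomain ℤ ℤ (fun q : G ⧸ H => x • q) (π v)) :
    Function.Injective ⇑ρ := by
  have hker : ker π ≤ (permRep ℤ ρ.ker (G ⧸ H₁)).invariants := by
    rw [← hexact]
    rintro _ ⟨m, rfl⟩ ⟨g, hg⟩
    change Finsupp.lmapDomain ℤ ℤ (fun q : G ⧸ H₁ => g • q) (f m) = f m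
    rw [← hfequiv, MonoidHom.mem_ker.mp hg, Module.End.one_apply]
  have hcore := le_normalCore_of_ker_le_invariants hH₁ ρ.ker π hπ (fun g => hπequiv g) hker
  rw [hH, le_bot_iff] at hcore
  exact (MonoidHom.ker_eq_bot_iff ρ).mp hcore

/-- Let `G` be a finite group, `H ≤ G` a subgroup containing no
nontrivial normal subgroup of `G` (i.e. its normal core `⋂_{g∈G} gHg⁻¹` is trivial),
let `H₁` be a proper subgroup of `H`, and let `0 → M → ℤ[G/H₁] → ω(G/H) → 0` be an exact
sequence of `ℤ[G]`-modules, where `M` is a `G`-lattice (a `ℤ[G]`-module which is finite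
free over `ℤ`).  Here `ℤ[G/K]` is modelled as `(G ⧸ K) →₀ ℤ` with `G` acting by left
translation, `ω(G/H)` is the kernel of the augmentation map `ℤ[G/H] → ℤ`, and the maps
`f, π` are `G`-equivariant `ℤ`-linear maps with `f` injective, `ker π = range f` and
`range π = ω(G/H)`.  Then the `G`-action on `M` is faithful. -/
theorem lattice_faithful_of_proper {G : Type*} [Group G] [Finite G]
    (H : Subgroup G) (hH : H.normalCore = ⊥)
    (H₁ : Subgroup G) (hH₁ : H₁ < H)
    (M : Type*) [AddCommGroup M] [Module ℤ M] [Module.Free ℤ M] [Module.Finite ℤ M]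
    (ρ : Representation ℤ G M)
    (f : M →ₗ[ℤ] ((G ⧸ H₁) →₀ ℤ))
    (π : ((G ⧸ H₁) →₀ ℤ) →ₗ[ℤ] ((G ⧸ H) →₀ ℤ))
    (hf : Function.Injective f)
    (hexact : LinearMap.range f = LinearMap.ker π)
    (hπ : LinearMap.range π
      = LinearMap.ker (Finsupp.linearCombination ℤ (fun _ : G ⧸ H => (1 : ℤ))))
    (hfequiv : ∀ (x : G) (m : M),
      f (ρ x m) = Finsupp.lmapDomain ℤ ℤ (fun q : G ⧸ H₁ => x • q) (f m))
    (hπequiv : ∀ (x : G) (v : (G ⧸ H₁) →₀ ℤ),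
      π (Finsupp.lmapDomain ℤ ℤ (fun q : G ⧸ H₁ => x • q) v)
        = Finsupp.lmapDomain ℤ ℤ (fun q : G ⧸ H => x • q) (π v)) :
    Function.Injective ⇑ρ :=
  lattice_faithful_of_proper_general H hH H₁ hH₁ M ρ f π hexact hπ hfequiv hπequiv
end

section
/- Let G be a finite group and H₁ ≤ H ≤ G subgroups. Then there is an isomorphism of ℚ[G]-modules ℚ[G/H₁] ≅ Ind_H^G ω(H/H₁)_ℚ ⊕ ω(G/H)_ℚ ⊕ ℚ, where the last summand ℚ carries the trivial G-action. -/
/-- The function model of the induced module `Ind_H^G ω(H/H₁)_ℚ = ℚ[G] ⊗_{ℚ[H]} ω(H/H₁)_ℚ`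
(for a finite group these are canonically isomorphic): `f : G → ℚ[H/H₁]` belongs to the
induced module iff every value `f x` lies in `ω(H/H₁)_ℚ` (the kernel of the augmentation
`ℚ[H/H₁] → ℚ`) and `f (x·h) = h⁻¹ • (f x)` for all `x ∈ G`, `h ∈ H`.  The `G`-action on
this module is `(g • f) x = f (g⁻¹ x)`. -/
def MemInducedOmega {G : Type*} [Group G] (H H₁ : Subgroup G)
    (f : G → ((H ⧸ H₁.subgroupOf H) →₀ ℚ)) : Prop :=
  (∀ x : G,
      Finsupp.linearCombination ℚ (fun _ : H ⧸ H₁.subgroupOf H => (1 : ℚ)) (f x) = 0)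
  ∧ ∀ (x : G) (h : H), f (x * h) =
      Finsupp.lmapDomain ℚ ℚ (fun c : H ⧸ H₁.subgroupOf H => h⁻¹ • c) (f x)

/-!
Write `π : G/H₁ → G/H` for the projection. The fibre of `π` over `xH` is the translate
`x • (H/H₁)`, so restricting `v ∈ ℚ[G/H₁]` to fibres gives a family `f : G → ℚ[H/H₁]` with
`f (x * h) = h⁻¹ • f x`; this identifies `ℚ[G/H₁]` with `Ind_H^G ℚ[H/H₁]`. Subtracting from each
`f x` its mean splits `ℚ[H/H₁] = ω(H/H₁)_ℚ ⊕ ℚ`, and what is split off is the family of fibre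
sums, i.e. the push-forward `π_* v ∈ ℚ[G/H]`. Splitting `ℚ[G/H] = ω(G/H)_ℚ ⊕ ℚ` in the same way
leaves the total mass of `v`. Adding the means back inverts each step, since `|H/H₁|` and
`|G/H|` are invertible in `ℚ`.
-/

open Finsupp

noncomputable section

namespace PermutationModule

section Augmentation

variable (k : Type*) [Semiring k]

abbrev augmentation (α : Type*) : (α →₀ k) →ₗ[k] k :=
  linearCombination k fun _ => 1

variable {k} {α β : Type*}

theorem augmentation_single (a : α) (r : k) : augmentation k α (single a r) = r := by
  simp

theorem augmentation_eq_sum [Fintype α] (w : α →₀ k) : augmentation k α w = ∑ a, w a := by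
  simp [linearCombination_apply, sum_fintype]

theorem augmentation_mapDomain (f : α → β) (w : α →₀ k) :
    augmentation k β (mapDomain f w) = augmentation k α w :=
  linearCombination_mapDomain _ _ _

theorem lmapDomain_smul_apply {M : Type*} [Group M] [MulAction M α] (g : M) (w : α →₀ k)
    (a : α) : lmapDomain k k (g • ·) w a = w (g⁻¹ • a) := by
  rw [lmapDomain_apply, ← mapDomain_apply (MulAction.injective g) w, smul_inv_smul]

end Augmentation

section Mean

variable {k : Type*} [Field k] (α : Type*) [Finite α]

def spread : k →ₗ[k] α →₀ k :=
  LinearMap.toSpanSingleton k _ (equivFunOnFinite.symm fun _ => (Nat.card α : k)⁻¹)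

def center : (α →₀ k) →ₗ[k] α →₀ k :=
  LinearMap.id - spread α ∘ₗ augmentation k α

variable {α}

theorem spread_apply (t : k) (a : α) : spread α t a = t / Nat.card α := by
  simp [spread, div_eq_mul_inv]

theorem center_apply (w : α →₀ k) : center α w = w - spread α (augmentation k α w) := rfl

theorem center_add_spread_augmentation (w : α →₀ k) :
    center α w + spread α (augmentation k α w) = w :=
  sub_add_cancel _ _

theorem lmapDomain_smul_spread {M : Type*} [Group M] [MulAction M α] (g : M) (t : k) :
    lmapDomain k k (g • ·) (spread α t) = spread α t := by
  ext a
  rw [lmapDomain_smul_apply, spread_apply, spread_apply]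

theorem center_lmapDomain_smul {M : Type*} [Group M] [MulAction M α] (g : M) (w : α →₀ k) :
    center α (lmapDomain k k (g • ·) w) = lmapDomain k k (g • ·) (center α w) := by
  rw [center_apply, center_apply, map_sub, lmapDomain_apply, augmentation_mapDomain,
    lmapDomain_smul_spread]

variable [CharZero k] [Nonempty α]

theorem augmentation_spread (t : k) : augmentation k α (spread α t) = t := by
  have := Fintype.ofFinite α
  have hcard : (Fintype.card α : k) ≠ 0 := Nat.cast_ne_zero.mpr Fintype.card_ne_zero
  rw [augmentation_eq_sum]
  simp only [spread_apply, Nat.card_eq_fintype_card, Finset.sum_const, Finset.card_univ,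
    nsmul_eq_mul]
  field_simp

theorem augmentation_center (w : α →₀ k) : augmentation k α (center α w) = 0 := by
  rw [center_apply, map_sub, augmentation_spread, sub_self]

theorem center_add_spread {w : α →₀ k} (hw : augmentation k α w = 0) (t : k) :
    center α (w + spread α t) = w := by
  rw [center_apply, map_add, hw, zero_add, augmentation_spread, add_sub_cancel_right]

end Mean

section Cosets

variable {k : Type*} [Semiring k] {G : Type*} [Group G] (H : Subgroup G) {H₁ : Subgroup G}

def quotientSubgroupOfIncl (H₁ : Subgroup G) : H ⧸ H₁.subgroupOf H → G ⧸ H₁ :=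
  Quotient.map' Subtype.val fun a b hab => by
    rw [QuotientGroup.leftRel_apply, Subgroup.mem_subgroupOf] at hab
    rw [QuotientGroup.leftRel_apply]
    simpa using hab

@[simp]
theorem quotientSubgroupOfIncl_mk (h : H) :
    quotientSubgroupOfIncl H H₁ (h : H ⧸ H₁.subgroupOf H) = ((h : G) : G ⧸ H₁) := rfl

theorem quotientSubgroupOfIncl_injective : Function.Injective (quotientSubgroupOfIncl H H₁) := by
  rintro ⟨a⟩ ⟨b⟩ hab
  exact QuotientGroup.eq.mpr (Subgroup.mem_subgroupOf.mpr (QuotientGroup.eq.mp hab))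

theorem quotientSubgroupOfIncl_smul (h : H) (c : H ⧸ H₁.subgroupOf H) :
    quotientSubgroupOfIncl H H₁ (h • c) = (h : G) • quotientSubgroupOfIncl H H₁ c := by
  induction c using QuotientGroup.induction_on with
  | H c => rfl

theorem quotientMapOfLE_eq_iff_exists (h₁ : H₁ ≤ H) (x : G) (a : G ⧸ H₁) :
    Subgroup.quotientMapOfLE h₁ a = x ↔ ∃ c, x • quotientSubgroupOfIncl H H₁ c = a := by
  induction a using QuotientGroup.induction_on with
  | H y =>
    rw [Subgroup.quotientMapOfLE_apply_mk, eq_comm, QuotientGroup.eq]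
    constructor
    · intro hy
      exact ⟨((⟨x⁻¹ * y, hy⟩ : H) : H ⧸ H₁.subgroupOf H), by simp⟩
    · rintro ⟨c, hc⟩
      induction c using QuotientGroup.induction_on with
      | H c =>
        have hxc : (x * c)⁻¹ * y ∈ H₁ := QuotientGroup.eq.mp hc
        rw [show x⁻¹ * y = c * ((x * c)⁻¹ * y) by group]
        exact H.mul_mem c.2 (h₁ hxc)

def restrictToCoset (x : G) : ((G ⧸ H₁) →₀ k) →ₗ[k] H ⧸ H₁.subgroupOf H →₀ k :=
  lcomapDomain (fun c => x • quotientSubgroupOfIncl H H₁ c)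
    ((MulAction.injective x).comp (quotientSubgroupOfIncl_injective H))

variable {H}

theorem restrictToCoset_apply (x : G) (v : (G ⧸ H₁) →₀ k) (c : H ⧸ H₁.subgroupOf H) :
    restrictToCoset H x v c = v (x • quotientSubgroupOfIncl H H₁ c) :=
  comapDomain_apply _ _ _ _

theorem restrictToCoset_lmapDomain_smul (g x : G) (v : (G ⧸ H₁) →₀ k) :
    restrictToCoset H x (lmapDomain k k (g • ·) v) = restrictToCoset H (g⁻¹ * x) v := by
  ext c
  rw [restrictToCoset_apply, restrictToCoset_apply, lmapDomain_smul_apply, mul_smul]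

theorem restrictToCoset_mul (x : G) (h : H) (v : (G ⧸ H₁) →₀ k) :
    restrictToCoset H (x * h) v = lmapDomain k k (h⁻¹ • ·) (restrictToCoset H x v) := by
  ext c
  rw [restrictToCoset_apply, lmapDomain_smul_apply, inv_inv, restrictToCoset_apply,
    quotientSubgroupOfIncl_smul, mul_smul]

theorem augmentation_restrictToCoset (h₁ : H₁ ≤ H) (x : G) (v : (G ⧸ H₁) →₀ k) :
    augmentation k _ (restrictToCoset H x v) = mapDomain (Subgroup.quotientMapOfLE h₁) v x := by
  induction v using Finsupp.induction_linear with
  | zero => simp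
  | add v w hv hw => rw [map_add, map_add, hv, hw, mapDomain_add, Finsupp.add_apply]
  | single a r =>
    classical
    rw [mapDomain_single, single_apply]
    by_cases hfib : Subgroup.quotientMapOfLE h₁ a = x
    · obtain ⟨c, rfl⟩ := (quotientMapOfLE_eq_iff_exists H h₁ x a).mp hfib
      rw [if_pos hfib, restrictToCoset, lcomapDomain_apply, comapDomain_single,
        augmentation_single]
    · have hres : restrictToCoset H x (single a r) = 0 := by
        ext c
        rw [restrictToCoset_apply, single_apply, if_neg, Finsupp.zero_apply]
        exact fun hc => hfib ((quotientMapOfLE_eq_iff_exists H h₁ x a).mpr ⟨c, hc.symm⟩)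
      rw [if_neg hfib, hres, map_zero]

theorem mapDomain_quotientMapOfLE_smul (h₁ : H₁ ≤ H) (g : G) (v : (G ⧸ H₁) →₀ k) :
    mapDomain (Subgroup.quotientMapOfLE h₁) (mapDomain (g • ·) v)
      = mapDomain (g • ·) (mapDomain (Subgroup.quotientMapOfLE h₁) v) := by
  rw [← mapDomain_comp, ← mapDomain_comp]
  congr 1
  funext a
  induction a using QuotientGroup.induction_on with
  | H a => rfl

variable (H) [Finite (G ⧸ H₁)]

/-- The choice of representatives `a.out` is immaterial on families with
`f (x * h) = h⁻¹ • f x`, on which this inverts `x ↦ restrictToCoset H x`. -/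
def ofCosetFamily (f : G → H ⧸ H₁.subgroupOf H →₀ k) : (G ⧸ H₁) →₀ k :=
  equivFunOnFinite.symm fun a => f a.out ((1 : H) : H ⧸ H₁.subgroupOf H)

variable {H}

theorem ofCosetFamily_apply (f : G → H ⧸ H₁.subgroupOf H →₀ k) (a : G ⧸ H₁) :
    ofCosetFamily H f a = f a.out ((1 : H) : H ⧸ H₁.subgroupOf H) := rfl

theorem ofCosetFamily_restrictToCoset (v : (G ⧸ H₁) →₀ k) :
    ofCosetFamily H (fun x => restrictToCoset H x v) = v := by
  ext a
  simp [ofCosetFamily_apply, restrictToCoset_apply]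

theorem restrictToCoset_ofCosetFamily (h₁ : H₁ ≤ H) {f : G → H ⧸ H₁.subgroupOf H →₀ k}
    (hf : ∀ (x : G) (h : H), f (x * h) = lmapDomain k k (h⁻¹ • ·) (f x)) (x : G) :
    restrictToCoset H x (ofCosetFamily H f) = f x := by
  ext c
  induction c using QuotientGroup.induction_on with
  | H h =>
    obtain ⟨h₀, hout⟩ := QuotientGroup.mk_out_eq_mul H₁ (x * h)
    have hout' : (((x * h : G) : G ⧸ H₁).out) = x * ((h * ⟨h₀, h₁ h₀.2⟩ : H) : G) := by
      rw [hout, Subgroup.coe_mul, mul_assoc]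
    rw [restrictToCoset_apply, quotientSubgroupOfIncl_mk, MulAction.Quotient.smul_mk,
      smul_eq_mul, ofCosetFamily_apply, hout', hf,
      lmapDomain_smul_apply, inv_inv, MulAction.Quotient.smul_mk, smul_eq_mul, mul_one]
    exact congrArg (f x) (QuotientGroup.mk_mul_of_mem h h₀.2)

end Cosets

section Decomposition

variable (k : Type*) [Field k] {G : Type*} [Group G] [Finite G] {H H₁ : Subgroup G}

def decomposition (h₁ : H₁ ≤ H) :
    ((G ⧸ H₁) →₀ k) →ₗ[k] (G → H ⧸ H₁.subgroupOf H →₀ k) × ((G ⧸ H) →₀ k) × k :=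
  (LinearMap.pi fun x => center _ ∘ₗ restrictToCoset H x).prod
    ((center _ ∘ₗ lmapDomain k k (Subgroup.quotientMapOfLE h₁)).prod (augmentation k _))

def recomposition (p : (G → H ⧸ H₁.subgroupOf H →₀ k) × ((G ⧸ H) →₀ k) × k) :
    (G ⧸ H₁) →₀ k :=
  ofCosetFamily H fun x => p.1 x + spread _ ((p.2.1 + spread (G ⧸ H) p.2.2) (x : G ⧸ H))

variable {k} (h₁ : H₁ ≤ H)

theorem decomposition_apply (v : (G ⧸ H₁) →₀ k) :
    decomposition k h₁ v = (fun x => center _ (restrictToCoset H x v),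
      center _ (mapDomain (Subgroup.quotientMapOfLE h₁) v), augmentation k _ v) := rfl

theorem recomposition_decomposition :
    Function.LeftInverse (recomposition k) (decomposition k h₁) := by
  intro v
  have hpush := center_add_spread_augmentation (mapDomain (Subgroup.quotientMapOfLE h₁) v)
  rw [augmentation_mapDomain] at hpush
  have hres (x : G) : center _ (restrictToCoset H x v)
      + spread _ (mapDomain (Subgroup.quotientMapOfLE h₁) v x) = restrictToCoset H x v := by
    rw [← augmentation_restrictToCoset h₁, center_add_spread_augmentation]
  simp only [recomposition, decomposition_apply, hpush, hres]
  exact ofCosetFamily_restrictToCoset v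

theorem decomposition_lmapDomain_smul (g : G) (v : (G ⧸ H₁) →₀ k) :
    decomposition k h₁ (lmapDomain k k (g • ·) v)
      = (fun y => (decomposition k h₁ v).1 (g⁻¹ * y),
        lmapDomain k k (g • ·) (decomposition k h₁ v).2.1, (decomposition k h₁ v).2.2) := by
  simp only [decomposition_apply, Prod.mk.injEq]
  refine ⟨funext fun y => ?_, ?_, ?_⟩
  · rw [restrictToCoset_lmapDomain_smul]
  · rw [lmapDomain_apply, mapDomain_quotientMapOfLE_smul]
    exact center_lmapDomain_smul g _
  · exact augmentation_mapDomain _ v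

variable [CharZero k]

theorem decomposition_recomposition
    {f : G → H ⧸ H₁.subgroupOf H →₀ k} {w : (G ⧸ H) →₀ k} (t : k)
    (hf₀ : ∀ x, augmentation k _ (f x) = 0)
    (hf : ∀ (x : G) (h : H), f (x * h) = lmapDomain k k (h⁻¹ • ·) (f x))
    (hw : augmentation k _ w = 0) :
    decomposition k h₁ (recomposition k (f, w, t)) = (f, w, t) := by
  set v := recomposition k (f, w, t)
  have hg (x : G) (h : H) : f (x * h) + spread _ ((w + spread (G ⧸ H) t) ((x * h : G) : G ⧸ H))
      = lmapDomain k k (h⁻¹ • ·) (f x + spread _ ((w + spread (G ⧸ H) t) (x : G ⧸ H))) := by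
    rw [map_add, lmapDomain_smul_spread, hf, QuotientGroup.mk_mul_of_mem x h.2]
  have hres (x : G) :
      restrictToCoset H x v = f x + spread _ ((w + spread (G ⧸ H) t) (x : G ⧸ H)) :=
    restrictToCoset_ofCosetFamily h₁ hg x
  have hpush : mapDomain (Subgroup.quotientMapOfLE h₁) v = w + spread _ t := by
    ext d
    induction d using QuotientGroup.induction_on with
    | H x => rw [← augmentation_restrictToCoset h₁, hres, map_add, hf₀, zero_add,
        augmentation_spread]
  rw [decomposition_apply, hpush, center_add_spread hw, ← augmentation_mapDomain, hpush,
    map_add, hw, zero_add, augmentation_spread]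
  simp only [hres, center_add_spread (hf₀ _)]

theorem decomposition_mem (v : (G ⧸ H₁) →₀ k) :
    ((∀ x, augmentation k _ ((decomposition k h₁ v).1 x) = 0)
      ∧ ∀ (x : G) (h : H), (decomposition k h₁ v).1 (x * h)
        = lmapDomain k k (h⁻¹ • ·) ((decomposition k h₁ v).1 x))
    ∧ augmentation k _ (decomposition k h₁ v).2.1 = 0 := by
  refine ⟨⟨fun x => augmentation_center _, fun x h => ?_⟩, augmentation_center _⟩
  simp only [decomposition_apply, restrictToCoset_mul, center_lmapDomain_smul]

end Decomposition

end PermutationModule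

end

open PermutationModule

/-- Let `G` be a finite group and `H₁ ≤ H ≤ G` subgroups.  Then there is
an isomorphism of `ℚ[G]`-modules `ℚ[G/H₁] ≅ Ind_H^G ω(H/H₁)_ℚ ⊕ ω(G/H)_ℚ ⊕ ℚ`, where the
last summand `ℚ` carries the trivial `G`-action.  Here `ℚ[G/K]` is modelled as
`(G ⧸ K) →₀ ℚ` with `G` acting by left translation of cosets, `ω(G/H)_ℚ` is the kernel of
the augmentation map `ℚ[G/H] → ℚ`, the induced module is realized by its function model
`MemInducedOmega` inside `G → ℚ[H/H₁]`, and the isomorphism is an injective `G`-equivariant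
`ℚ`-linear map from `ℚ[G/H₁]` onto the direct sum of the three submodules. -/
theorem perm_module_decomposition {G : Type*} [Group G] [Finite G]
    (H H₁ : Subgroup G) (h₁ : H₁ ≤ H) :
    ∃ e : ((G ⧸ H₁) →₀ ℚ) →ₗ[ℚ]
        ((G → ((H ⧸ H₁.subgroupOf H) →₀ ℚ)) × ((G ⧸ H) →₀ ℚ) × ℚ),
      Function.Injective e
      ∧ Set.range e = {p | MemInducedOmega H H₁ p.1
          ∧ Finsupp.linearCombination ℚ (fun _ : G ⧸ H => (1 : ℚ)) p.2.1 = 0}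
      ∧ ∀ (x : G) (v : (G ⧸ H₁) →₀ ℚ),
          e (Finsupp.lmapDomain ℚ ℚ (fun c : G ⧸ H₁ => x • c) v)
            = (fun y => (e v).1 (x⁻¹ * y),
               Finsupp.lmapDomain ℚ ℚ (fun c : G ⧸ H => x • c) (e v).2.1,
               (e v).2.2) := by
  refine ⟨decomposition ℚ h₁, (recomposition_decomposition h₁).injective, ?_,
    decomposition_lmapDomain_smul h₁⟩
  ext p
  constructor
  · rintro ⟨v, rfl⟩
    exact decomposition_mem h₁ v
  · rintro ⟨⟨hf₀, hf⟩, hw⟩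
    exact ⟨_, decomposition_recomposition h₁ _ hf₀ hf hw⟩
end
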